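/- arXiv:1302.5382 — 5 statements merged into one kernel-verified Lean document; each statement's English description precedes it below -/
import Mathlib

section
/- Let f : (Fin n → Bool) → ℂ² and suppose every variable v_i (i : Fin n) is r-linear for f with angle θ_i. Then for every assignment U : Fin n → Bool, f(U) = R_x(Σ_{i : U i = true} θ_i) · f(const false); in particular f is determined by its value at the all-false assignment together with one rotation angle per variable. -/
/-!
By the angle addition formulas, `θ ↦ R_x(θ)` is an action of `(ℝ, +)` on `ℂ²`. Switching the true
coordinates of `U` on one at a time, starting from the all-false assignment, the switch of
coordinate `i` acts by `θ_i`, so `f U` is obtained from `f (const false)` by acting with the sum of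
these angles. Nothing beyond an action of an additive commutative monoid is needed.
-/

open Matrix

/-- The rotation around the x axis: rows (cos(θ/2), −i·sin(θ/2)), (−i·sin(θ/2), cos(θ/2)). -/
noncomputable def Rx (θ : ℝ) : Matrix (Fin 2) (Fin 2) ℂ :=
  !![(Real.cos (θ / 2) : ℂ), -Complex.I * Real.sin (θ / 2);
     -Complex.I * Real.sin (θ / 2), (Real.cos (θ / 2) : ℂ)]

/-- The basis state 0̂ = (1, 0). -/
def ket0 : Fin 2 → ℂ := ![1, 0]

/-- The basis state 1̂ = (0, −i). -/
def ket1 : Fin 2 → ℂ := ![0, -Complex.I]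

/-- Embedding of a Boolean into the basis {0̂, 1̂}. -/
def emb (b : Bool) : Fin 2 → ℂ := if b then ket1 else ket0

/-- Controlled rotation: `cop a θ v = Rx θ · v` if `a` is true, else `v`. -/
noncomputable def cop (a : Bool) (θ : ℝ) (v : Fin 2 → ℂ) : Fin 2 → ℂ :=
  if a then (Rx θ).mulVec v else v

lemma Rx_zero : Rx 0 = 1 := by
  simp [Rx, Matrix.one_fin_two]

lemma Rx_add (a b : ℝ) : Rx (a + b) = Rx a * Rx b := by
  simp only [Rx, Matrix.mul_fin_two, add_div, Real.cos_add, Real.sin_add]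
  push_cast
  ext i j
  fin_cases i <;> fin_cases j <;> simp <;> ring_nf <;> simp only [Complex.I_sq] <;> ring

noncomputable abbrev rxAddAction : AddAction ℝ (Fin 2 → ℂ) where
  vadd θ v := (Rx θ).mulVec v
  zero_vadd v := by simp only [HVAdd.hVAdd, Rx_zero, Matrix.one_mulVec]
  add_vadd a b v := by simp only [HVAdd.hVAdd, Rx_add, Matrix.mulVec_mulVec]

section BooleanCube

open Function

variable {ι A β : Type*} [DecidableEq ι] [AddCommMonoid A] [AddAction A β]

theorem apply_indicator_eq_sum_vadd {f : (ι → Bool) → β} {θ : ι → A}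
    (hlin : ∀ i U, f (update U i true) = θ i +ᵥ f (update U i false)) (s : Finset ι) :
    f (fun i => decide (i ∈ s)) = (∑ i ∈ s, θ i) +ᵥ f (fun _ => false) := by
  induction s using Finset.induction_on with
  | empty => simp
  | insert a s ha ih =>
    have h_true : update (fun i => decide (i ∈ s)) a true = fun i => decide (i ∈ insert a s) := by
      funext i
      by_cases hi : i = a <;> simp [hi]
    have h_false : update (fun i => decide (i ∈ s)) a false = fun i => decide (i ∈ s) := by
      simp [ha]
    rw [← h_true, hlin, h_false, ih, vadd_vadd, Finset.sum_insert ha]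

theorem apply_eq_sum_vadd [Fintype ι] {f : (ι → Bool) → β} {θ : ι → A}
    (hlin : ∀ i U, f (update U i true) = θ i +ᵥ f (update U i false)) (U : ι → Bool) :
    f U = (∑ i ∈ Finset.univ.filter (fun i => U i = true), θ i) +ᵥ f (fun _ => false) := by
  convert apply_indicator_eq_sum_vadd hlin _
  simp

end BooleanCube

theorem stmt_7 (n : ℕ) (f : (Fin n → Bool) → (Fin 2 → ℂ)) (θ : Fin n → ℝ)
    (hlin : ∀ (i : Fin n) (U : Fin n → Bool),
      f (Function.update U i true) = (Rx (θ i)).mulVec (f (Function.update U i false))) :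
    ∀ U : Fin n → Bool,
      f U = (Rx (∑ i ∈ Finset.univ.filter (fun i => U i = true), θ i)).mulVec
        (f (fun _ => false)) := by
  let := rxAddAction
  exact apply_eq_sum_vadd (θ := θ) hlin
end

section
/- (Theorem 1, part II.) Let f : (Fin n → Bool) → ℂ², let k be an index, let α₁ ∈ ℝ, and define g : (Fin n → Bool) → Bool by g(U) = true iff f_{v_k}(U) = R_x(α₁)·f_{v̄_k}(U), and g₁(U) := (U k) XOR g(U). If an index i ≠ k is r-linear for f with some angle θ, then g and g₁ are invariant with respect to v_i: for every assignment U, g(U with coordinate i set to true) = g(U with coordinate i set to false), and likewise for g₁. -/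
open Matrix

/-! Applying `R_x(θ)` to both sides of the condition `f_{v_k} = R_x(α) f_{v̄_k}` taken at `v̄_i`
yields the same condition at `v_i`, because rotations about the x axis commute with each other;
since `R_x(θ)` is invertible the converse holds as well. -/

lemma Rx_mul_Rx (a b : ℝ) : Rx a * Rx b = Rx (a + b) := by
  have hc : Real.cos ((a + b) / 2) = Real.cos (a / 2) * Real.cos (b / 2)
      - Real.sin (a / 2) * Real.sin (b / 2) := by rw [add_div, Real.cos_add]
  have hs : Real.sin ((a + b) / 2) = Real.sin (a / 2) * Real.cos (b / 2)
      + Real.cos (a / 2) * Real.sin (b / 2) := by rw [add_div, Real.sin_add]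
  ext x y
  fin_cases x <;> fin_cases y <;>
    simp [Rx, hc, hs, mul_apply, Fin.sum_univ_two] <;> ring_nf <;>
    simp only [Complex.I_sq] <;> ring

lemma isUnit_Rx (θ : ℝ) : IsUnit (Rx θ) :=
  ⟨⟨Rx θ, Rx (-θ), by rw [Rx_mul_Rx, add_neg_cancel, Rx_zero],
    by rw [Rx_mul_Rx, neg_add_cancel, Rx_zero]⟩, rfl⟩

lemma Rx_commute (a b : ℝ) : Commute (Rx a) (Rx b) := by
  rw [Commute, SemiconjBy, Rx_mul_Rx, Rx_mul_Rx, add_comm]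

lemma Matrix.mulVec_eq_mulVec_mulVec_iff {R m : Type*} [Semiring R] [Fintype m]
    [DecidableEq m] {A M : Matrix m m R} (hM : IsUnit M) (hAM : Commute A M) (v w : m → R) :
    M *ᵥ v = A *ᵥ (M *ᵥ w) ↔ v = A *ᵥ w := by
  rw [mulVec_mulVec, hAM.eq, ← mulVec_mulVec]
  exact (mulVec_injective_of_isUnit hM).eq_iff

section RLinear

variable {ι : Type*} [DecidableEq ι]

def RLinearAt (f : (ι → Bool) → Fin 2 → ℂ) (k : ι) (α : ℝ) (U : ι → Bool) : Prop :=
  f (Function.update U k true) = Rx α *ᵥ f (Function.update U k false)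

def IsRLinear (f : (ι → Bool) → Fin 2 → ℂ) (i : ι) (θ : ℝ) : Prop :=
  ∀ U, RLinearAt f i θ U

lemma IsRLinear.rLinearAt_update_iff {f : (ι → Bool) → Fin 2 → ℂ} {i k : ι} {θ : ℝ}
    (hlin : IsRLinear f i θ) (hik : i ≠ k) (α : ℝ) (U : ι → Bool) :
    RLinearAt f k α (Function.update U i true) ↔ RLinearAt f k α (Function.update U i false) := by
  simp only [RLinearAt, Function.update_comm hik _ _ U]
  rw [hlin (Function.update U k true), hlin (Function.update U k false)]
  exact mulVec_eq_mulVec_mulVec_iff (isUnit_Rx θ) (Rx_commute α θ) _ _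

end RLinear

theorem stmt_8 (n : ℕ) (f : (Fin n → Bool) → (Fin 2 → ℂ)) (k : Fin n) (α₁ : ℝ)
    (g g₁ : (Fin n → Bool) → Bool)
    (hg : ∀ U, g U = true ↔
      f (Function.update U k true) = (Rx α₁).mulVec (f (Function.update U k false)))
    (hg₁ : ∀ U, g₁ U = xor (U k) (g U))
    (i : Fin n) (hik : i ≠ k) (θ : ℝ)
    (hlin : ∀ U : Fin n → Bool,
      f (Function.update U i true) = (Rx θ).mulVec (f (Function.update U i false))) :
    (∀ U : Fin n → Bool,
        g (Function.update U i true) = g (Function.update U i false)) ∧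
    (∀ U : Fin n → Bool,
        g₁ (Function.update U i true) = g₁ (Function.update U i false)) := by
  have hg_inv : ∀ U : Fin n → Bool,
      g (Function.update U i true) = g (Function.update U i false) := fun U =>
    Bool.coe_iff_coe.mp <|
      (hg _).trans <| (IsRLinear.rLinearAt_update_iff hlin hik α₁ U).trans (hg _).symm
  refine ⟨hg_inv, fun U => ?_⟩
  rw [hg₁, hg₁, hg_inv, Function.update_of_ne hik.symm, Function.update_of_ne hik.symm]
end

section
/- (Theorem 1, part V.) Let f : (Fin n → Bool) → ℂ², let k be an index, and let α₁, α₂, …, α_m be real numbers (m ≥ 2) such that for every assignment U there exists j ∈ {1,…,m} with f_{v_k}(U) = R_x(α_j)·f_{v̄_k}(U). Define g(U) = true iff f_{v_k}(U) = R_x(α₁)·f_{v̄_k}(U), g₁(U) := (U k) XOR g(U), γ := (α₂ − α₁)/2, and h(U) := cop(g₁(U), −γ, f(U)). Then for every assignment U there exists β in the set {(α₁+α₂)/2} ∪ {α_j − γ : 3 ≤ j ≤ m} (a set of at most m−1 angles) such that h_{v_k}(U) = R_x(β)·h_{v̄_k}(U); hence the degree of r-nonlinearity of v_k in h is at most m−2.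 -/
/-!
The condition `f_{v_k}(U) = R_x(α₁) f_{v̄_k}(U)` defining `g` does not involve `U k`, so `g` is constant on the
pair `U₀ = U[k := false]`, `U₁ = U[k := true]` and `g₁` is true on exactly one of them. Hence
`R_x(-γ)` is applied to exactly one end of the pair, and since the rotations `R_x` form a
one-parameter group this shifts the relative angle by `±γ`: the angle `α₁` (where `g` holds)
becomes `α₁ + γ`, every other `α_j` becomes `α_j - γ`, and `α₁ + γ = α₂ - γ = (α₁ + α₂)/2`.
-/

open Matrix

lemma Rx_mulVec_Rx_mulVec (a b : ℝ) (v : Fin 2 → ℂ) :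
    Rx a *ᵥ (Rx b *ᵥ v) = Rx (a + b) *ᵥ v := by
  rw [Rx_add, Matrix.mulVec_mulVec]

lemma cop_not_eq_Rx_mulVec_cop {v₀ v₁ : Fin 2 → ℂ} {a : ℝ} (θ : ℝ) (c : Bool)
    (hv : v₁ = Rx a *ᵥ v₀) :
    cop (!c) θ v₁ = Rx (if c then a - θ else a + θ) *ᵥ cop c θ v₀ := by
  cases c
  · simp only [cop, Bool.not_false, if_true, Bool.false_eq_true, if_false, hv,
      Rx_mulVec_Rx_mulVec, add_comm θ]
  · simp only [cop, Bool.not_true, Bool.false_eq_true, if_false, if_true, hv,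
      Rx_mulVec_Rx_mulVec, sub_add_cancel]

theorem stmt_12 (n : ℕ) (f : (Fin n → Bool) → (Fin 2 → ℂ)) (k : Fin n)
    (m : ℕ) (hm : 2 ≤ m) (α : Fin m → ℝ)
    (hcover : ∀ U : Fin n → Bool, ∃ j : Fin m,
      f (Function.update U k true) = (Rx (α j)).mulVec (f (Function.update U k false)))
    (g g₁ : (Fin n → Bool) → Bool) (γ : ℝ) (h : (Fin n → Bool) → (Fin 2 → ℂ))
    (hg : ∀ U, g U = true ↔
      f (Function.update U k true) = (Rx (α ⟨0, by omega⟩)).mulVec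
        (f (Function.update U k false)))
    (hg₁ : ∀ U, g₁ U = xor (U k) (g U))
    (hγ : γ = (α ⟨1, by omega⟩ - α ⟨0, by omega⟩) / 2)
    (hh : ∀ U, h U = cop (g₁ U) (-γ) (f U)) :
    ∀ U : Fin n → Bool, ∃ β : ℝ,
      (β = (α ⟨0, by omega⟩ + α ⟨1, by omega⟩) / 2 ∨
        ∃ j : Fin m, 2 ≤ (j : ℕ) ∧ β = α j - γ) ∧
      h (Function.update U k true) = (Rx β).mulVec (h (Function.update U k false)) := by
  intro U
  obtain ⟨j, hj⟩ := hcover U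
  set U₀ := Function.update U k false
  set U₁ := Function.update U k true
  have hg_update (b : Bool) :
      g (Function.update U k b) = true ↔ f U₁ = Rx (α ⟨0, by omega⟩) *ᵥ f U₀ := by
    simpa only [Function.update_idem] using hg (Function.update U k b)
  have hg_eq : g U₁ = g U₀ := Bool.eq_iff_iff.2 ((hg_update true).trans (hg_update false).symm)
  have hh₁ : h U₁ = cop (!g U₀) (-γ) (f U₁) := by
    rw [hh, hg₁, show U₁ k = true from Function.update_self .., Bool.true_xor, hg_eq]
  have hh₀ : h U₀ = cop (g U₀) (-γ) (f U₀) := by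
    rw [hh, hg₁, show U₀ k = false from Function.update_self .., Bool.false_xor]
  cases hc : g U₀
  · have hj₀ : (j : ℕ) ≠ 0 := fun h₀ => by
      rw [show j = ⟨0, by omega⟩ from Fin.ext h₀] at hj
      exact Bool.false_ne_true (hc.symm.trans ((hg_update false).2 hj))
    refine ⟨α j - γ, ?_, ?_⟩
    · rcases Nat.lt_or_ge j 2 with hj₁ | hj₂
      · left
        rw [show j = ⟨1, by omega⟩ from Fin.ext (by simp only; omega), hγ]
        ring
      · exact Or.inr ⟨j, hj₂, rfl⟩
    · rw [hh₁, hh₀, hc, cop_not_eq_Rx_mulVec_cop _ _ hj, if_neg Bool.false_ne_true, sub_eq_add_neg]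
  · refine ⟨_, Or.inl rfl, ?_⟩
    rw [hh₁, hh₀, hc, cop_not_eq_Rx_mulVec_cop _ _ ((hg_update false).1 hc), if_pos rfl, hγ]
    ring_nf
end

section
/- Let n ≥ 1 and let a_i, b_i ∈ {0,1} for i = 0,…,n−1 be the bits of A = Σ_{i<n} 2^i a_i and B = Σ_{i<n} 2^i b_i. Let s_i ∈ {0,1} be the bits of (A+B) mod 2^n and let c = 1 if A + B ≥ 2^n and c = 0 otherwise. Then Σ_{i<n} (π/2^{n−i})·(a_i + b_i − s_i) = π·c; consequently, by the cascade-evaluation rule, the carry-output cascade of the paper's n-qubit ripple adder, which applies to the ancilla 0̂ the controlled rotations by angles π/2^{n−i} with controls a_i and b_i followed by controlled rotations by angles −π/2^{n−i} with controls s_i, yields exactly R_x(π·c)·0̂ = emb(c). -/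
open Matrix

/-!
Writing `A`, `B`, `S` for the numbers with bits `a`, `b`, `s`, we have `A + B = 2ⁿ c + S`
because `A, B < 2ⁿ`. Since `π / 2^(n-i) = (π / 2ⁿ) 2ⁱ`, the angle sum is `(π / 2ⁿ)(A + B - S) = π c`,
and `R_x(0)` fixes `0̂` while `R_x(π)` sends it to `1̂`.
-/

lemma sum_two_pow_mul_toNat_lt (n : ℕ) (t : Fin n → Bool) :
    ∑ i : Fin n, 2 ^ (i : ℕ) * (t i).toNat < 2 ^ n :=
  calc ∑ i : Fin n, 2 ^ (i : ℕ) * (t i).toNat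
      ≤ ∑ i : Fin n, 2 ^ (i : ℕ) :=
        Finset.sum_le_sum fun i _ => mul_le_of_le_one_right (Nat.zero_le _) (t i).toNat_le
    _ = ∑ i ∈ Finset.range n, 2 ^ i := Fin.sum_univ_eq_sum_range (2 ^ ·) n
    _ < 2 ^ n := Nat.geomSum_lt le_rfl fun _ => Finset.mem_range.mp

lemma Nat.div_eq_toNat_decide_le {x m : ℕ} (hx : x < 2 * m) :
    x / m = (decide (m ≤ x)).toNat := by
  by_cases h : m ≤ x
  · simp only [h, decide_true, Bool.toNat_true]
    exact Nat.div_eq_of_lt_le (by simpa using h) (by linarith)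
  · simp only [h, decide_false, Bool.toNat_false]
    exact Nat.div_eq_of_lt (not_le.mp h)

lemma sum_div_two_pow_sub_mul {K : Type*} [Field K] [NeZero (2 : K)] {n : ℕ} (x : K)
    (f : Fin n → K) :
    ∑ i : Fin n, x / 2 ^ (n - (i : ℕ)) * f i = x / 2 ^ n * ∑ i : Fin n, 2 ^ (i : ℕ) * f i := by
  rw [Finset.mul_sum]
  refine Finset.sum_congr rfl fun i _ => ?_
  rw [pow_sub₀ (2 : K) two_ne_zero i.is_lt.le]
  field_simp

lemma Rx_pi_mul_toNat_mulVec_ket0 (c : Bool) :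
    (Rx (Real.pi * (c.toNat : ℝ))).mulVec ket0 = emb c := by
  funext k
  cases c <;> fin_cases k <;>
    simp [Rx, ket0, ket1, emb, mulVec, dotProduct, Fin.sum_univ_two]

theorem stmt_15_general (n : ℕ) (a b s : Fin n → Bool) (c : Bool)
    (hs : ∑ i : Fin n, 2 ^ (i : ℕ) * (s i).toNat =
      ((∑ i : Fin n, 2 ^ (i : ℕ) * (a i).toNat) +
        (∑ i : Fin n, 2 ^ (i : ℕ) * (b i).toNat)) % 2 ^ n)
    (hc : c = decide (2 ^ n ≤
      (∑ i : Fin n, 2 ^ (i : ℕ) * (a i).toNat) +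
        (∑ i : Fin n, 2 ^ (i : ℕ) * (b i).toNat))) :
    (∑ i : Fin n, (Real.pi / 2 ^ (n - (i : ℕ))) *
        (((a i).toNat : ℝ) + ((b i).toNat : ℝ) - ((s i).toNat : ℝ))
      = Real.pi * (c.toNat : ℝ)) ∧
    (Rx (∑ i : Fin n, (Real.pi / 2 ^ (n - (i : ℕ))) *
        (((a i).toNat : ℝ) + ((b i).toNat : ℝ) - ((s i).toNat : ℝ)))).mulVec ket0
      = emb c := by
  have hA := sum_two_pow_mul_toNat_lt n a
  have hB := sum_two_pow_mul_toNat_lt n b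
  have hcarry : (∑ i : Fin n, 2 ^ (i : ℕ) * (a i).toNat) + ∑ i : Fin n, 2 ^ (i : ℕ) * (b i).toNat
      = 2 ^ n * c.toNat + ∑ i : Fin n, 2 ^ (i : ℕ) * (s i).toNat := by
    rw [hs, hc, ← Nat.div_eq_toNat_decide_le (by omega), Nat.div_add_mod]
  have hangle : ∑ i : Fin n, (Real.pi / 2 ^ (n - (i : ℕ))) *
      (((a i).toNat : ℝ) + ((b i).toNat : ℝ) - ((s i).toNat : ℝ)) = Real.pi * (c.toNat : ℝ) := by
    have hcarry_real := congrArg (Nat.cast : ℕ → ℝ) hcarry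
    push_cast at hcarry_real
    have hweighted : ∑ i : Fin n, (2 : ℝ) ^ (i : ℕ) *
        (((a i).toNat : ℝ) + ((b i).toNat : ℝ) - ((s i).toNat : ℝ)) = 2 ^ n * c.toNat := by
      simp only [mul_sub, mul_add, Finset.sum_sub_distrib, Finset.sum_add_distrib]
      linarith
    rw [sum_div_two_pow_sub_mul, hweighted]
    field_simp
  exact ⟨hangle, hangle ▸ Rx_pi_mul_toNat_mulVec_ket0 c⟩

theorem stmt_15 (n : ℕ) (hn : 1 ≤ n) (a b s : Fin n → Bool) (c : Bool)
    (hs : ∑ i : Fin n, 2 ^ (i : ℕ) * (s i).toNat =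
      ((∑ i : Fin n, 2 ^ (i : ℕ) * (a i).toNat) +
        (∑ i : Fin n, 2 ^ (i : ℕ) * (b i).toNat)) % 2 ^ n)
    (hc : c = decide (2 ^ n ≤
      (∑ i : Fin n, 2 ^ (i : ℕ) * (a i).toNat) +
        (∑ i : Fin n, 2 ^ (i : ℕ) * (b i).toNat))) :
    (∑ i : Fin n, (Real.pi / 2 ^ (n - (i : ℕ))) *
        (((a i).toNat : ℝ) + ((b i).toNat : ℝ) - ((s i).toNat : ℝ))
      = Real.pi * (c.toNat : ℝ)) ∧
    (Rx (∑ i : Fin n, (Real.pi / 2 ^ (n - (i : ℕ))) *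
        (((a i).toNat : ℝ) + ((b i).toNat : ℝ) - ((s i).toNat : ℝ)))).mulVec ket0
      = emb c :=
  stmt_15_general n a b s c hs hc
end

section
/- For every n ≥ 1 and all bits x₁,…,x_n ∈ {0,1} (as real numbers), (π/2^{n−1})·x₁ + Σ_{l=2}^{n} (π/2^{n−l+1})·(x₁x₂⋯x_{l−1})·(2x_l − 1) = π·(x₁x₂⋯x_n). This telescoping angle identity is the correctness core of the paper's ancilla-free construction of the multiple-control Toffoli gate C^nNOT from controlled rotations. -/
open Matrix

/-!
Since `(x₁⋯x_{l-1})(2x_l - 1) = 2P_l - P_{l-1}` for the prefix products `P_l = x₁⋯x_l`, the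
`l`-th summand is `g l - g (l - 1)` with `g l = π P_l / 2^(n-l)`; the sum telescopes to
`π P_n - π P_1 / 2^(n-1)`, and the first term cancels the remainder.
-/

open Finset

theorem Finset.sum_Icc_succ_sub_pred {M : Type*} [AddCommGroup M] (g : ℕ → M) {m n : ℕ}
    (hmn : m ≤ n) : ∑ l ∈ Icc (m + 1) n, (g l - g (l - 1)) = g n - g m := by
  induction n, hmn using Nat.le_induction with
  | base => simp
  | succ n hmn ih =>
    rw [sum_Icc_succ_top (by omega), ih, Nat.add_sub_cancel]
    abel

theorem sum_Icc_halving_telescope {K : Type*} [Field K] [NeZero (2 : K)] (c : K) (f : ℕ → K)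
    {n : ℕ} (hn : 1 ≤ n) :
    c / 2 ^ (n - 1) * f 1 + ∑ l ∈ Icc 2 n, c / 2 ^ (n - l + 1) * (2 * f l - f (l - 1))
      = c * f n := by
  set g : ℕ → K := fun l ↦ c / 2 ^ (n - l) * f l
  have hstep : ∀ l ∈ Icc 2 n, c / 2 ^ (n - l + 1) * (2 * f l - f (l - 1)) = g l - g (l - 1) := by
    intro l hl
    rw [mem_Icc] at hl
    simp only [g]
    rw [show n - (l - 1) = n - l + 1 by omega, pow_succ]
    field_simp
  rw [sum_congr rfl hstep, sum_Icc_succ_sub_pred g hn]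
  simp [g]

theorem prod_Icc_pred_mul_two_mul_sub_one {R : Type*} [CommRing R] (x : ℕ → R) {l : ℕ}
    (hl : 1 ≤ l) :
    (∏ j ∈ Icc 1 (l - 1), x j) * (2 * x l - 1)
      = 2 * ∏ j ∈ Icc 1 l, x j - ∏ j ∈ Icc 1 (l - 1), x j := by
  obtain ⟨k, rfl⟩ := Nat.exists_eq_add_of_le' hl
  rw [Nat.add_sub_cancel, prod_Icc_succ_top (by omega)]
  ring

theorem stmt_16_general (n : ℕ) (hn : 1 ≤ n) (x : ℕ → ℝ) :
    (Real.pi / 2 ^ (n - 1)) * x 1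
        + ∑ l ∈ Finset.Icc 2 n,
            (Real.pi / 2 ^ (n - l + 1)) * (∏ j ∈ Finset.Icc 1 (l - 1), x j) * (2 * x l - 1)
      = Real.pi * ∏ i ∈ Finset.Icc 1 n, x i := by
  have hsummand : ∀ l ∈ Icc 2 n,
      Real.pi / 2 ^ (n - l + 1) * (∏ j ∈ Icc 1 (l - 1), x j) * (2 * x l - 1)
        = Real.pi / 2 ^ (n - l + 1) *
            (2 * ∏ j ∈ Icc 1 l, x j - ∏ j ∈ Icc 1 (l - 1), x j) := by
    intro l hl
    rw [mul_assoc, prod_Icc_pred_mul_two_mul_sub_one x (by rw [mem_Icc] at hl; omega)]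
  rw [sum_congr rfl hsummand, ← sum_Icc_halving_telescope Real.pi (fun l ↦ ∏ j ∈ Icc 1 l, x j) hn]
  simp

theorem stmt_16 (n : ℕ) (hn : 1 ≤ n) (x : ℕ → ℝ)
    (hx : ∀ i, 1 ≤ i → i ≤ n → x i = 0 ∨ x i = 1) :
    (Real.pi / 2 ^ (n - 1)) * x 1
        + ∑ l ∈ Finset.Icc 2 n,
            (Real.pi / 2 ^ (n - l + 1)) * (∏ j ∈ Finset.Icc 1 (l - 1), x j) * (2 * x l - 1)
      = Real.pi * ∏ i ∈ Finset.Icc 1 n, x i :=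
  stmt_16_general n hn x
end
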